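/- Let X be a finite set with |X| ≥ 3 and S a commutative nilpotent subsemigroup of T(X) whose zero e has rank at least 2. Then |S| < ξ(|X|), where ξ(n) = max{t^(n−t) : 1 ≤ t ≤ n}. -/

import Mathlib

/-- `S` is a subsemigroup of the full transformation semigroup on `X`
(maps act on the right, so the product `β·γ` is `γ ∘ β`). -/
def IsTransSub {X : Type*} (S : Set (X → X)) : Prop :=
  ∀ β ∈ S, ∀ γ ∈ S, (γ ∘ β) ∈ S

/-- `e` is a zero element of `S`: `βe = eβ = e` for all `β ∈ S`. -/
def IsZeroElem {X : Type*} (S : Set (X → X)) (e : X → X) : Prop :=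
  e ∈ S ∧ ∀ β ∈ S, e ∘ β = e ∧ β ∘ e = e

/-- `S` is nilpotent with zero `e`: some `m ≥ 1` such that every product of
`m` elements of `S` equals `e`. -/
def IsNilpotentSub {X : Type*} (S : Set (X → X)) (e : X → X) : Prop :=
  ∃ m : ℕ, 0 < m ∧ ∀ L : List (X → X), L.length = m → (∀ f ∈ L, f ∈ S) →
    L.foldr (· ∘ ·) id = e

/-- `S` is commutative. -/
def IsCommSub {X : Type*} (S : Set (X → X)) : Prop :=
  ∀ β ∈ S, ∀ γ ∈ S, β ∘ γ = γ ∘ β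

/-- `S` is a null semigroup with zero `e`: every product of two elements is `e`. -/
def IsNullSub {X : Type*} (S : Set (X → X)) (e : X → X) : Prop :=
  ∀ β ∈ S, ∀ γ ∈ S, γ ∘ β = e

/-- `ξ(n) = max { t ^ (n - t) : 1 ≤ t ≤ n }`. -/
def xi (n : ℕ) : ℕ := (Finset.Icc 1 n).sup (fun t => t ^ (n - t))

/-- `α(n) = max { t ∈ {1,…,n} : t ^ (n - t) = ξ(n) }`. -/
def alphaMax (n : ℕ) : ℕ :=
  ((Finset.Icc 1 n).filter (fun t => t ^ (n - t) = xi n)).sup id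

/-!
Let `W = S X` be the union of the images of the elements of `S`. By commutativity and
nilpotency, an element of `S` is determined by its restriction to `X \ W`. On the other
hand `e β = e` and `e` fixes its image pointwise, so for every `x` the value `β x` avoids a
point of `range e` other than `e x`; it therefore ranges over at most `|W| - 1` points of `W`.
Hence, with `n = |X|`, `|S| ≤ (|W| - 1) ^ (n - |W|) < |W| ^ (n - |W|) ≤ ξ(n)` when `W ≠ X`,
and `|S| = 1 < 2 ^ (n - 2) ≤ ξ(n)` when `W = X`.
-/

/-- The set `S X`. -/
def rangeUnion {X : Type*} (S : Set (X → X)) : Set X :=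
  ⋃ β ∈ S, Set.range β

lemma apply_mem_rangeUnion {X : Type*} {S : Set (X → X)} {β : X → X} (hβ : β ∈ S) (x : X) :
    β x ∈ rangeUnion S :=
  Set.mem_biUnion hβ (Set.mem_range_self x)

lemma foldr_comp_append_singleton {X : Type*} (L : List (X → X)) (f : X → X) :
    (L ++ [f]).foldr (· ∘ ·) id = L.foldr (· ∘ ·) id ∘ f := by
  induction L with
  | nil => rfl
  | cons g L ih => simp only [List.cons_append, List.foldr_cons, ih, Function.comp_assoc]

section Nilpotent

variable {X : Type*} {S : Set (X → X)} {e : X → X} {β γ : X → X}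

/-- Downward induction on `L.length`: at length `m` both sides are `e`, and a point of
`rangeUnion S` is `f z` with `f ∈ S`, which `β` and `γ` commute with, lengthening `L` by one. -/
lemma foldr_comp_eq_of_eqOn_compl_rangeUnion (hcomm : IsCommSub S) (he : IsZeroElem S e)
    {m : ℕ} (hm : ∀ L : List (X → X), L.length = m → (∀ f ∈ L, f ∈ S) →
      L.foldr (· ∘ ·) id = e)
    (hβ : β ∈ S) (hγ : γ ∈ S) (h : ∀ u ∉ rangeUnion S, β u = γ u) :
    ∀ j (L : List (X → X)), L.length + j = m → (∀ f ∈ L, f ∈ S) →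
      L.foldr (· ∘ ·) id ∘ β = L.foldr (· ∘ ·) id ∘ γ := by
  intro j
  induction j with
  | zero =>
    intro L hL hLS
    rw [hm L hL hLS, (he.2 β hβ).1, (he.2 γ hγ).1]
  | succ j ih =>
    intro L hL hLS
    funext z
    by_cases hz : z ∈ rangeUnion S
    · obtain ⟨f, hf, z', rfl⟩ : ∃ f ∈ S, ∃ z', f z' = z := by
        simpa [rangeUnion] using hz
      have hLf : (L ++ [f]).foldr (· ∘ ·) id ∘ β = (L ++ [f]).foldr (· ∘ ·) id ∘ γ :=
        ih (L ++ [f]) (by simp; omega) (by simpa [or_imp, forall_and] using ⟨hLS, hf⟩)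
      have hβf : β (f z') = f (β z') := congrFun (hcomm β hβ f hf) z'
      have hγf : γ (f z') = f (γ z') := congrFun (hcomm γ hγ f hf) z'
      simpa only [Function.comp_apply, hβf, hγf, foldr_comp_append_singleton] using
        congrFun hLf z'
    · simp only [Function.comp_apply, h z hz]

lemma eq_of_eqOn_compl_rangeUnion (hcomm : IsCommSub S) (he : IsZeroElem S e)
    (hnil : IsNilpotentSub S e) (hβ : β ∈ S) (hγ : γ ∈ S)
    (h : ∀ u ∉ rangeUnion S, β u = γ u) : β = γ := by
  obtain ⟨m, -, hm⟩ := hnil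
  simpa using foldr_comp_eq_of_eqOn_compl_rangeUnion hcomm he hm hβ hγ h m [] (by simp)
    (by simp)

lemma apply_ne_of_mem_range_zero (he : IsZeroElem S e) (hβ : β ∈ S) {x y : X}
    (hy : y ∈ Set.range e) (hyx : y ≠ e x) : β x ≠ y := by
  rintro rfl
  obtain ⟨z, hz⟩ := hy
  have hee : e (e z) = e z := congrFun (he.2 e he.1).1 z
  have hex : e (β x) = e x := congrFun (he.2 β hβ).1 x
  rw [← hz, hee] at hex
  exact hyx (hz ▸ hex)

lemma ncard_le_pred_pow [Finite X] (hcomm : IsCommSub S) (he : IsZeroElem S e)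
    (hnil : IsNilpotentSub S e) (hrank : 2 ≤ (Set.range e).ncard) :
    S.ncard ≤ ((rangeUnion S).ncard - 1) ^ (rangeUnion S)ᶜ.ncard := by
  classical
  have : Fintype ↥(rangeUnion S)ᶜ := Fintype.ofFinite _
  choose y hy hyx using fun x : X =>
    Set.exists_ne_of_one_lt_ncard (by omega : 1 < (Set.range e).ncard) (e x)
  have hyW (x : X) : y x ∈ rangeUnion S := by
    obtain ⟨z, hz⟩ := hy x
    exact hz ▸ apply_mem_rangeUnion he.1 z
  let restrict : S → ∀ x : ↥(rangeUnion S)ᶜ, ↥(rangeUnion S \ {y x}) := fun β x =>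
    ⟨β.1 x, apply_mem_rangeUnion β.2 x, apply_ne_of_mem_range_zero he β.2 (hy x) (hyx x)⟩
  have hinj : Function.Injective restrict := fun β γ hβγ =>
    Subtype.ext <| eq_of_eqOn_compl_rangeUnion hcomm he hnil β.2 γ.2 fun u hu =>
      congrArg Subtype.val (congrFun hβγ ⟨u, hu⟩)
  calc S.ncard = Nat.card S := (Nat.card_coe_set_eq S).symm
    _ ≤ Nat.card (∀ x : ↥(rangeUnion S)ᶜ, ↥(rangeUnion S \ {y x})) :=
      Nat.card_le_card_of_injective restrict hinj
    _ = ((rangeUnion S).ncard - 1) ^ (rangeUnion S)ᶜ.ncard := by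
      simp only [Nat.card_pi, Nat.card_coe_set_eq, Set.ncard_sdiff_singleton_of_mem (hyW _),
        Finset.prod_const, Finset.card_univ, ← Nat.card_eq_fintype_card]

end Nilpotent

lemma pow_sub_le_xi {n t : ℕ} (ht : 1 ≤ t) (htn : t ≤ n) : t ^ (n - t) ≤ xi n :=
  Finset.le_sup (f := fun t => t ^ (n - t)) (Finset.mem_Icc.2 ⟨ht, htn⟩)

lemma lt_xi_of_le_pred_pow {n w s : ℕ} (hn : 3 ≤ n) (hw : 2 ≤ w) (hwn : w ≤ n)
    (hs : s ≤ (w - 1) ^ (n - w)) : s < xi n := by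
  rcases Nat.eq_zero_or_pos (n - w) with hnw | hnw
  · calc s ≤ 1 := by simpa [hnw] using hs
      _ < 2 ^ (n - 2) := Nat.one_lt_two_pow (by omega)
      _ ≤ xi n := pow_sub_le_xi (by norm_num) (by omega)
  · calc s ≤ (w - 1) ^ (n - w) := hs
      _ < w ^ (n - w) := Nat.pow_lt_pow_left (by omega) hnw.ne'
      _ ≤ xi n := pow_sub_le_xi (by omega) hwn

theorem stmt11_general {X : Type*} [Fintype X] (hX : 3 ≤ Fintype.card X)
    (S : Set (X → X)) (hcomm : IsCommSub S)
    (e : X → X) (he : IsZeroElem S e) (hnil : IsNilpotentSub S e)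
    (hrank : 2 ≤ (Set.range e).ncard) :
    S.ncard < xi (Fintype.card X) := by
  have hw : 2 ≤ (rangeUnion S).ncard := hrank.trans <| Set.ncard_le_ncard <| by
    rintro _ ⟨x, rfl⟩
    exact apply_mem_rangeUnion he.1 x
  have hcard : (rangeUnion S).ncard + (rangeUnion S)ᶜ.ncard = Fintype.card X := by
    rw [Set.ncard_add_ncard_compl, Nat.card_eq_fintype_card]
  refine lt_xi_of_le_pred_pow hX hw (by omega) ?_
  rw [← hcard, Nat.add_sub_cancel_left]
  exact ncard_le_pred_pow hcomm he hnil hrank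

theorem stmt11 {X : Type*} [Fintype X] (hX : 3 ≤ Fintype.card X)
    (S : Set (X → X)) (hS : IsTransSub S) (hcomm : IsCommSub S)
    (e : X → X) (he : IsZeroElem S e) (hnil : IsNilpotentSub S e)
    (hrank : 2 ≤ (Set.range e).ncard) :
    S.ncard < xi (Fintype.card X) :=
  stmt11_general hX S hcomm e he hnil hrank
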